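/- Let M and N be symmetric real n×n matrices, let Γ be a symmetric positive definite n×n matrix, let S be a skew-symmetric n×n matrix, let Δ ≥ 1 and β = (Δ + 1/Δ)/2. Suppose the 2n×2n block matrix K with (1,1)-block −Γ, (1,2)-block (1/2)N + β·Γ + S, (2,1)-block ((1/2)N + β·Γ + S)ᵀ, and (2,2)-block M − Γ has negative definite quadratic form, i.e. zᵀKz < 0 for all nonzero z ∈ ℝ^{2n}. Then for every δ ∈ [1/Δ, Δ], the symmetric matrix M + δ·N is negative definite. -/

import Mathlib

/-!
Evaluate the block form at `z = (δ x, x)`: the skew part `S` drops out and the form becomes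
`xᵀ(M + δN)x - (δ² + 1 - 2βδ) xᵀΓx`. Since `δ² + 1 - 2βδ = -(Δ - δ)(δ - 1/Δ) ≤ 0` on
`[1/Δ, Δ]` and `Γ ≻ 0`, negativity of the block form forces `xᵀ(M + δN)x < 0`.
-/

open Matrix

section QuadraticForm

variable {l m R : Type*} [Fintype l] [Fintype m]

theorem dotProduct_transpose_mulVec_self [CommSemiring R] (A : Matrix l l R) (x : l → R) :
    x ⬝ᵥ Aᵀ *ᵥ x = x ⬝ᵥ A *ᵥ x :=
  dotProduct_transpose_mulVec A x x

theorem dotProduct_mulVec_self_eq_zero_of_transpose_eq_neg [CommRing R] [IsAddTorsionFree R]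
    {S : Matrix l l R} (hS : Sᵀ = -S) (x : l → R) : x ⬝ᵥ S *ᵥ x = 0 := by
  rw [← self_eq_neg]
  nth_rw 1 [← dotProduct_transpose_mulVec_self, hS, neg_mulVec, dotProduct_neg]

theorem sumElim_dotProduct_fromBlocks_mulVec_sumElim [CommSemiring R] (A : Matrix l l R)
    (B : Matrix l m R) (C : Matrix m l R) (D : Matrix m m R) (u : l → R) (v : m → R) :
    Sum.elim u v ⬝ᵥ fromBlocks A B C D *ᵥ Sum.elim u v =
      u ⬝ᵥ A *ᵥ u + u ⬝ᵥ B *ᵥ v + (v ⬝ᵥ C *ᵥ u + v ⬝ᵥ D *ᵥ v) := by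
  rw [fromBlocks_mulVec, sumElim_dotProduct_sumElim]
  simp only [Sum.elim_comp_inl, Sum.elim_comp_inr, dotProduct_add]

theorem sProcedure_quadForm_eq [Field R] [CharZero R] (M N Γ : Matrix l l R) {S : Matrix l l R}
    (hS : Sᵀ = -S) (β δ : R) (x : l → R) :
    Sum.elim (δ • x) x ⬝ᵥ fromBlocks (-Γ) ((1/2 : R) • N + β • Γ + S)
        (((1/2 : R) • N + β • Γ + S)ᵀ) (M - Γ) *ᵥ Sum.elim (δ • x) x =
      x ⬝ᵥ (M + δ • N) *ᵥ x - (δ ^ 2 + 1 - 2 * β * δ) * (x ⬝ᵥ Γ *ᵥ x) := by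
  rw [sumElim_dotProduct_fromBlocks_mulVec_sumElim]
  simp only [mulVec_smul, dotProduct_smul, smul_dotProduct, smul_eq_mul,
    dotProduct_transpose_mulVec_self, neg_mulVec, dotProduct_neg, sub_mulVec, dotProduct_sub,
    add_mulVec, smul_mulVec, dotProduct_add, dotProduct_mulVec_self_eq_zero_of_transpose_eq_neg hS]
  ring

end QuadraticForm

theorem sq_add_one_le_mul_of_mem_Icc {K : Type*} [Field K] [LinearOrder K] [IsStrictOrderedRing K]
    {Δ δ : K} (hΔ : Δ ≠ 0) (hδ : δ ∈ Set.Icc (1/Δ) Δ) : δ ^ 2 + 1 ≤ (Δ + 1/Δ) * δ := by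
  have h := mul_nonneg (sub_nonneg.2 hδ.2) (sub_nonneg.2 hδ.1)
  have hinv : Δ * (1/Δ) = 1 := mul_one_div_cancel hΔ
  linear_combination h - hinv

theorem s_procedure_delta_general {n : ℕ} (M N Γ S : Matrix (Fin n) (Fin n) ℝ)
    (hΓpos : ∀ x : Fin n → ℝ, x ≠ 0 → 0 < x ⬝ᵥ Γ.mulVec x)
    (hS : Sᵀ = -S) (Δ : ℝ) (hΔ : 1 ≤ Δ) (β : ℝ) (hβ : β = (Δ + 1/Δ)/2)
    (hK : ∀ z : Fin n ⊕ Fin n → ℝ, z ≠ 0 →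
      z ⬝ᵥ (Matrix.fromBlocks (-Γ) ((1/2 : ℝ) • N + β • Γ + S)
        (((1/2 : ℝ) • N + β • Γ + S)ᵀ) (M - Γ)).mulVec z < 0) :
    ∀ δ : ℝ, δ ∈ Set.Icc (1/Δ) Δ →
      ∀ x : Fin n → ℝ, x ≠ 0 → x ⬝ᵥ (M + δ • N).mulVec x < 0 := by
  intro δ hδ x hx
  have hz : Sum.elim (δ • x) x ≠ 0 := fun h ↦ hx (funext fun i ↦ congrFun h (Sum.inr i))
  have hKz := hK _ hz
  rw [sProcedure_quadForm_eq M N Γ hS, hβ] at hKz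
  have hδβ := sq_add_one_le_mul_of_mem_Icc (zero_lt_one.trans_le hΔ).ne' hδ
  have hslack := mul_nonneg (sub_nonneg.2 hδβ) (hΓpos x hx).le
  linarith

/-- **S-procedure elimination of the uncertain scalar `δ ∈ [1/Δ, Δ]`.**
If the block matrix `K = [[-Γ, (1/2)N + β•Γ + S], [((1/2)N + β•Γ + S)ᵀ, M - Γ]]` has
negative definite quadratic form, then `M + δ • N` is negative definite for all
`δ ∈ [1/Δ, Δ]`. -/
theorem s_procedure_delta {n : ℕ} (M N Γ S : Matrix (Fin n) (Fin n) ℝ)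
    (hM : M.IsSymm) (hN : N.IsSymm) (hΓsymm : Γ.IsSymm)
    (hΓpos : ∀ x : Fin n → ℝ, x ≠ 0 → 0 < x ⬝ᵥ Γ.mulVec x)
    (hS : Sᵀ = -S) (Δ : ℝ) (hΔ : 1 ≤ Δ) (β : ℝ) (hβ : β = (Δ + 1/Δ)/2)
    (hK : ∀ z : Fin n ⊕ Fin n → ℝ, z ≠ 0 →
      z ⬝ᵥ (Matrix.fromBlocks (-Γ) ((1/2 : ℝ) • N + β • Γ + S)
        (((1/2 : ℝ) • N + β • Γ + S)ᵀ) (M - Γ)).mulVec z < 0) :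
    ∀ δ : ℝ, δ ∈ Set.Icc (1/Δ) Δ →
      ∀ x : Fin n → ℝ, x ≠ 0 → x ⬝ᵥ (M + δ • N).mulVec x < 0 :=
  s_procedure_delta_general M N Γ S hΓpos hS Δ hΔ β hβ hK
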